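/- Ground state energy of the cyclic sawtooth chain: For every spin configuration s : {1,…,12} → ℝ³ with s_μ · s_μ = 1 for all μ, the energy H(s) := 2 Σ_{j=0}^{5} (s_{2j+1}·s_{2j+2} + s_{2j+2}·s_{2j+3} + s_{2j+1}·s_{2j+3}) (indices taken modulo 12, in {1,…,12}) satisfies H(s) ≥ −18; and equality holds for the planar configuration in which s_μ depends only on μ mod 3, with the three values u_1 = (−1/2, √3/2, 0), u_2 = (1, 0, 0), u_0 = (−1/2, −√3/2, 0) for μ ≡ 1, 2, 0 (mod 3) respectively. Hence the minimal energy of the cyclic sawtooth chain with J_1 = J_2 = J_3 = 1 is E_min = −18. -/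

import Mathlib

/-- Heisenberg energy of the cyclic sawtooth chain with `J₁ = J₂ = J₃ = 1`:
twice the sum over the six triangles `{2j+1, 2j+2, 2j+3}` (indices mod 12)
of the three edge dot products. -/
noncomputable def sawtoothEnergy (s : ZMod 12 → Fin 3 → ℝ) : ℝ :=
  2 * ∑ j : Fin 6,
    ((∑ k, s ((2 * (j : ℕ) + 1 : ℕ) : ZMod 12) k * s ((2 * (j : ℕ) + 2 : ℕ) : ZMod 12) k)
      + (∑ k, s ((2 * (j : ℕ) + 2 : ℕ) : ZMod 12) k * s ((2 * (j : ℕ) + 3 : ℕ) : ZMod 12) k)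
      + (∑ k, s ((2 * (j : ℕ) + 1 : ℕ) : ZMod 12) k * s ((2 * (j : ℕ) + 3 : ℕ) : ZMod 12) k))

/-- The three coplanar unit vectors `u 0 = (−1/2, −√3/2, 0)`, `u 1 = (−1/2, √3/2, 0)`,
`u 2 = (1, 0, 0)` at mutual angles of 120°. -/
noncomputable def sawtoothPlanarVec : Fin 3 → Fin 3 → ℝ :=
  ![![-1/2, -(Real.sqrt 3) / 2, 0], ![-1/2, Real.sqrt 3 / 2, 0], ![1, 0, 0]]

/-- The planar ground state: the spin at site `μ` depends only on `μ mod 3`,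
taking the values `u 1, u 2, u 0` for `μ ≡ 1, 2, 0 (mod 3)` respectively. -/
noncomputable def sawtoothPlanarState (μ : ZMod 12) : Fin 3 → ℝ :=
  sawtoothPlanarVec ⟨μ.val % 3, by omega⟩

/-- For unit vectors `a, b, c`, the triangle energy is at least `-3/2`,
since `0 ≤ |a + b + c|² = 3 + 2(a·b + b·c + a·c)`. -/
lemma tri_lb (a b c : Fin 3 → ℝ) (ha : ∑ k, a k * a k = 1)
    (hb : ∑ k, b k * b k = 1) (hc : ∑ k, c k * c k = 1) :
    (∑ k, a k * b k) + (∑ k, b k * c k) + (∑ k, a k * c k) ≥ -(3/2) := by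
  have h : (0:ℝ) ≤ ∑ k, (a k + b k + c k) * (a k + b k + c k) :=
    Finset.sum_nonneg (fun k _ => mul_self_nonneg _)
  simp only [Fin.sum_univ_three] at *
  nlinarith [h]

lemma vec_unit (i : Fin 3) : ∑ k, sawtoothPlanarVec i k * sawtoothPlanarVec i k = 1 := by
  have h3 : Real.sqrt 3 * Real.sqrt 3 = 3 := Real.mul_self_sqrt (by norm_num)
  fin_cases i <;> simp only [sawtoothPlanarVec, Fin.sum_univ_three] <;>
    norm_num [Matrix.cons_val_two] <;> nlinarith [h3]

lemma vec_dot (i j : Fin 3) (h : i ≠ j) :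
    ∑ k, sawtoothPlanarVec i k * sawtoothPlanarVec j k = -(1/2) := by
  have h3 : Real.sqrt 3 * Real.sqrt 3 = 3 := Real.mul_self_sqrt (by norm_num)
  fin_cases i <;> fin_cases j <;>
    simp only [sawtoothPlanarVec, Fin.sum_univ_three] <;>
    first
      | exact absurd rfl h
      | (norm_num [Matrix.cons_val_two]; nlinarith [h3])
      | norm_num [Matrix.cons_val_two]

lemma state_cast (a : ℕ) :
    sawtoothPlanarState (a : ZMod 12) = sawtoothPlanarVec ⟨a % 3, Nat.mod_lt _ (by norm_num)⟩ := by
  unfold sawtoothPlanarState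
  exact congrArg _ (Fin.ext (by
    simp [ZMod.val_natCast, Nat.mod_mod_of_dvd _ (by norm_num : (3:ℕ) ∣ 12)]))

/-- Ground state energy of the cyclic sawtooth chain: every unit spin
configuration has energy `≥ -18`, and the planar 120° configuration consists of
unit vectors and attains the value `-18`; hence `E_min = -18`. -/
theorem sawtooth_ground_state_energy :
    (∀ s : ZMod 12 → Fin 3 → ℝ, (∀ μ, ∑ k, s μ k * s μ k = 1) →
      sawtoothEnergy s ≥ -18)
    ∧ (∀ μ, ∑ k, sawtoothPlanarState μ k * sawtoothPlanarState μ k = 1)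
    ∧ sawtoothEnergy sawtoothPlanarState = -18 := by
  refine ⟨?_, fun μ => vec_unit _, ?_⟩
  · intro s hs
    unfold sawtoothEnergy
    have key : ∀ j : Fin 6,
        ((∑ k, s ((2 * (j : ℕ) + 1 : ℕ) : ZMod 12) k * s ((2 * (j : ℕ) + 2 : ℕ) : ZMod 12) k)
         + (∑ k, s ((2 * (j : ℕ) + 2 : ℕ) : ZMod 12) k * s ((2 * (j : ℕ) + 3 : ℕ) : ZMod 12) k)
         + (∑ k, s ((2 * (j : ℕ) + 1 : ℕ) : ZMod 12) k * s ((2 * (j : ℕ) + 3 : ℕ) : ZMod 12) k))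
        ≥ -(3/2) := fun j => tri_lb _ _ _ (hs _) (hs _) (hs _)
    rw [Fin.sum_univ_six]
    linarith [key 0, key 1, key 2, key 3, key 4, key 5]
  · have term : ∀ j : Fin 6,
        ((∑ k, sawtoothPlanarState ((2 * (j : ℕ) + 1 : ℕ) : ZMod 12) k
            * sawtoothPlanarState ((2 * (j : ℕ) + 2 : ℕ) : ZMod 12) k)
         + (∑ k, sawtoothPlanarState ((2 * (j : ℕ) + 2 : ℕ) : ZMod 12) k
            * sawtoothPlanarState ((2 * (j : ℕ) + 3 : ℕ) : ZMod 12) k)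
         + (∑ k, sawtoothPlanarState ((2 * (j : ℕ) + 1 : ℕ) : ZMod 12) k
            * sawtoothPlanarState ((2 * (j : ℕ) + 3 : ℕ) : ZMod 12) k))
        = -(3/2) := by
      intro j
      rw [state_cast, state_cast, state_cast,
        vec_dot _ _ (by simp [Fin.ext_iff]; omega),
        vec_dot _ _ (by simp [Fin.ext_iff]; omega),
        vec_dot _ _ (by simp [Fin.ext_iff]; omega)]
      norm_num
    unfold sawtoothEnergy
    rw [Finset.sum_congr rfl (fun j _ => term j)]
    simp
    norm_num
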